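/- arXiv:2309.01857 — 2 statements merged into one kernel-verified Lean document; each statement's English description precedes it below -/
import Mathlib

section
/- Let F be a graph with chromatic number χ(F) = k+1, where k+1 > r, and let 2 ≤ p ≤ r. Then ex_r(n, F^{(r)+}) = ex_p(n, K_r^p, F^{(p)+}) + O(n^{r−1}); precisely, there is a constant C = C(F, r, p) such that for every n, |ex_r(n, F^{(r)+}) − ex_p(n, K_r^p, F^{(p)+})| ≤ C·n^{r−1}. -/
open Finset
open scoped Classical

/-- An `r`-uniform hypergraph on vertex type `V`: a finite set of `r`-element
vertex subsets, the hyperedges. -/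
structure HyperGraph (V : Type*) (r : ℕ) where
  edges : Finset (Finset V)
  uniform : ∀ e ∈ edges, e.card = r

namespace HyperGraph

variable {V α : Type*}

/-- A witness that the `r`-graph `G` contains a copy of the `r`-uniform expansion
`F^{(r)+}` of the graph `F`, with core embedding `φ` and, for each edge of `F`, a set
of `r - 2` expansion vertices given by `S`.  The expansion vertices avoid the core and
are pairwise disjoint over distinct edges. -/
def IsExpansionWitness [DecidableEq V] {r : ℕ} (G : HyperGraph V r) (F : SimpleGraph α)
    (φ : α ↪ V) (S : Sym2 α → Finset V) : Prop :=
  (∀ a b, F.Adj a b → (S s(a, b)).card = r - 2) ∧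
  (∀ a b, F.Adj a b → ∀ x ∈ S s(a, b), x ∉ Set.range φ) ∧
  (∀ e ∈ F.edgeSet, ∀ e' ∈ F.edgeSet, e ≠ e' → Disjoint (S e) (S e')) ∧
  (∀ a b, F.Adj a b → insert (φ a) (insert (φ b) (S s(a, b))) ∈ G.edges)

/-- The `r`-graph `G` contains a copy of the expansion `F^{(r)+}` (i.e. a subhypergraph
isomorphic to it). -/
def ContainsExpansion [DecidableEq V] {r : ℕ} (G : HyperGraph V r) (F : SimpleGraph α) : Prop :=
  ∃ φ S, G.IsExpansionWitness F φ S

end HyperGraph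

/-- `ex_r(n, F^{(r)+})`: the maximum number of hyperedges in an `n`-vertex
`F^{(r)+}`-free `r`-graph. -/
noncomputable def exExpansion (r n : ℕ) {α : Type*} (F : SimpleGraph α) : ℕ :=
  sSup {m | ∃ G : HyperGraph (Fin n) r, ¬ G.ContainsExpansion F ∧ G.edges.card = m}

/-- `F` is contained in `G` as a (not necessarily induced) subgraph. -/
def GraphContains {α β : Type*} (F : SimpleGraph α) (G : SimpleGraph β) : Prop :=
  ∃ f : α ↪ β, ∀ a b, F.Adj a b → G.Adj (f a) (f b)

/-- The number of copies of `K_r` (i.e. `r`-cliques) in the graph `G`. -/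
noncomputable def cliqueCount {V : Type*} [Fintype V] (G : SimpleGraph V) (r : ℕ) : ℕ :=
  Nat.card {s : Finset V // G.IsNClique r s}

/-- The generalized Turán number `ex(n, K_r, F)`: the maximum number of `r`-cliques
in an `n`-vertex `F`-free graph. -/
noncomputable def exClique (n r : ℕ) {α : Type*} (F : SimpleGraph α) : ℕ :=
  sSup {m | ∃ G : SimpleGraph (Fin n), ¬ GraphContains F G ∧ cliqueCount G r = m}

/-- The number of copies of the complete `p`-uniform hypergraph `K_r^p` in a `p`-graph `G`:
the number of `r`-element vertex sets all of whose `p`-subsets are hyperedges. -/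
noncomputable def hyperCliqueCount {V : Type*} [Fintype V] {p : ℕ} (G : HyperGraph V p)
    (r : ℕ) : ℕ :=
  Nat.card {R : Finset V // R.card = r ∧ ∀ e ⊆ R, e.card = p → e ∈ G.edges}

/-- `ex_p(n, K_r^p, F^{(p)+})`: the maximum number of copies of `K_r^p` in an `n`-vertex
`F^{(p)+}`-free `p`-graph. -/
noncomputable def exHyperClique (p r n : ℕ) {α : Type*} (F : SimpleGraph α) : ℕ :=
  sSup {m | ∃ G : HyperGraph (Fin n) p, ¬ G.ContainsExpansion F ∧ hyperCliqueCount G r = m}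

/-- `G` contains (a subgraph isomorphic to) a member of the decomposition family `D(F)`:
a bipartite graph obtained from a proper `(k+1)`-coloring of `F` by deleting `k - 1`
color classes. -/
def ContainsDecompMember {α β : Type*} (F : SimpleGraph α) (k : ℕ) (G : SimpleGraph β) : Prop :=
  ∃ c : α → Fin (k + 1), (∀ a b, F.Adj a b → c a ≠ c b) ∧
    ∃ i j : Fin (k + 1), i ≠ j ∧ GraphContains (F.induce {a | c a = i ∨ c a = j}) G

/-- `biex(n, F)`: the maximum number of edges of an `n`-vertex graph containing no member
of the decomposition family `D(F)` (for a graph `F` of chromatic number `k+1`). -/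
noncomputable def biex (n : ℕ) {α : Type*} (F : SimpleGraph α) (k : ℕ) : ℕ :=
  sSup {m | ∃ G : SimpleGraph (Fin n), ¬ ContainsDecompMember F k G ∧ Nat.card G.edgeSet = m}

/-- `t_r(n,k)`: the number of hyperedges of the complete balanced `k`-partite `r`-graph
`T_r(n,k)` (realized on `Fin n` with the balanced partition `v ↦ v % k`). -/
noncomputable def turanHyperCount (r n k : ℕ) : ℕ :=
  Nat.card {e : Finset (Fin n) // e.card = r ∧
    Set.InjOn (fun v : Fin n => v.val % k) ↑e}

/-- `|E(T_r(n,k,i))|`: the number of hyperedges of the `r`-graph obtained from `T_r(n-i,k)`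
by adding `i` new vertices (here the vertices with value `< i`) and all `r`-sets containing
at least one of them. -/
noncomputable def turanPlusCount (r n k i : ℕ) : ℕ :=
  Nat.card {e : Finset (Fin n) // e.card = r ∧
    ((∃ v ∈ e, v.val < i) ∨ Set.InjOn (fun v : Fin n => (v.val - i) % k) ↑e)}

/-- `G` has a color-critical edge: an edge whose deletion decreases the chromatic number. -/
def HasColorCriticalEdge {β : Type*} (G : SimpleGraph β) : Prop :=
  ∃ a b, G.Adj a b ∧ (G.deleteEdges {s(a, b)}).chromaticNumber < G.chromaticNumber

/-- `B_{k+1,1}`: two copies of `K_{k+1}` sharing exactly one vertex (the vertex `k`). -/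
def bowtie (k : ℕ) : SimpleGraph (Fin (2 * k + 1)) :=
  SimpleGraph.fromRel (fun a b => (a.val ≤ k ∧ b.val ≤ k) ∨ (k ≤ a.val ∧ k ≤ b.val))

/-- The `r`-graph `H'(m)` on `n` vertices: a complete `k`-partite `r`-graph with one part
`V_1` of size `m` (the vertices with value `< m`) and `k-1` balanced parts on the remaining
vertices, together with all `r`-sets containing both `u` (the vertex `0`) and `v` (the
vertex `1`), and all `r`-sets containing `u` and `r-1` vertices outside `V_1`. -/
noncomputable def HprimeGraph (r n k m : ℕ) : HyperGraph (Fin n) r :=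
  ⟨Finset.univ.filter (fun e : Finset (Fin n) => e.card = r ∧
      (Set.InjOn (fun v : Fin n => if v.val < m then 0 else (v.val - m) % (k - 1) + 1) ↑e
        ∨ ((∃ a ∈ e, a.val = 0) ∧ (∃ b ∈ e, b.val = 1))
        ∨ ((∃ a ∈ e, a.val = 0) ∧ ∀ w ∈ e, w.val ≠ 0 → m ≤ w.val))),
    fun e he => ((Finset.mem_filter.mp he).2).1⟩

/-- `Δ*(t)G`: the `(r-1)`-graph of `t`-heavy `(r-1)`-sets, i.e. the `(r-1)`-element
vertex sets contained in at least `t` hyperedges of `G`. -/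
noncomputable def shadowOp {V : Type*} [Fintype V] [DecidableEq V] {r : ℕ} (t : ℕ)
    (G : HyperGraph V r) : HyperGraph V (r - 1) :=
  ⟨Finset.univ.filter (fun A : Finset V =>
      A.card = r - 1 ∧ t ≤ (G.edges.filter (fun e => A ⊆ e)).card),
    fun A hA => ((Finset.mem_filter.mp hA).2).1⟩

/-- Iterated shadow operator: `iterShadow t G j = (Δ*(t))^j G`, a `(r-j)`-graph. -/
noncomputable def iterShadow {V : Type*} [Fintype V] [DecidableEq V] (t : ℕ) {r : ℕ}
    (G : HyperGraph V r) : (j : ℕ) → HyperGraph V (r - j)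
  | 0 => G
  | j + 1 => shadowOp t (iterShadow t G j)

/-- A vertex set `A` is `t`-fat with respect to `G`: there are at least `t` hyperedges
of `G` whose pairwise intersections all equal `A`. -/
def TFat {V : Type*} [DecidableEq V] {r : ℕ} (t : ℕ) (G : HyperGraph V r)
    (A : Finset V) : Prop :=
  ∃ E : Finset (Finset V), E ⊆ G.edges ∧ t ≤ E.card ∧
    ∀ e ∈ E, ∀ e' ∈ E, e ≠ e' → e ∩ e' = A

/-- The graph `G(𝒢)` of `t`-fat pairs of the `r`-graph `G`. -/
def fatGraph {V : Type*} [DecidableEq V] {r : ℕ} (t : ℕ) (G : HyperGraph V r) :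
    SimpleGraph V :=
  SimpleGraph.fromRel (fun x y => TFat t G {x, y})

/-- The `i`-graph whose hyperedges are the `t`-fat `i`-element vertex sets of `G`. -/
noncomputable def fatHyper {V : Type*} [Fintype V] [DecidableEq V] {r : ℕ} (t i : ℕ)
    (G : HyperGraph V r) : HyperGraph V i :=
  ⟨Finset.univ.filter (fun A : Finset V => A.card = i ∧ TFat t G A),
    fun A hA => ((Finset.mem_filter.mp hA).2).1⟩

/-- The `r`-graph whose hyperedges are the vertex sets of the `r`-cliques of `G`. -/
noncomputable def cliqueHyper {V : Type*} [Fintype V] (G : SimpleGraph V) (r : ℕ) :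
    HyperGraph V r :=
  ⟨Finset.univ.filter (fun e : Finset V => G.IsNClique r e),
    fun e he => ((Finset.mem_filter.mp he).2).card_eq⟩

/-- The `r`-graph on `n` vertices whose hyperedges are all `r`-sets containing the
fixed vertex `0`. -/
noncomputable def starHyper (n r : ℕ) : HyperGraph (Fin n) r :=
  ⟨Finset.univ.filter (fun e : Finset (Fin n) => e.card = r ∧ ∃ a ∈ e, a.val = 0),
    fun e he => ((Finset.mem_filter.mp he).2).1⟩

/-- `σ(F)`: the minimum size of a color class over all proper `(k+1)`-colorings of `F`. -/
noncomputable def sigmaF {α : Type*} (F : SimpleGraph α) (k : ℕ) : ℕ :=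
  sInf {m | ∃ c : α → Fin (k + 1), (∀ a b, F.Adj a b → c a ≠ c b) ∧
    ∃ i, m = Nat.card {a // c a = i}}

/-- The number of neighbors of `v` (in the graph `G`) lying in the part `i` of the
partition `P`. -/
noncomputable def nbrCount {n k : ℕ} (G : SimpleGraph (Fin n)) (P : Fin n → Fin k)
    (v : Fin n) (i : Fin k) : ℕ :=
  (Finset.univ.filter (fun w => G.Adj v w ∧ P w = i)).card

/-- The size of the part `i` of the partition `P`. -/
noncomputable def partSize {n k : ℕ} (P : Fin n → Fin k) (i : Fin k) : ℕ :=
  (Finset.univ.filter (fun v => P v = i)).card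

/-- Every copy (in the graph `G`) of a member of the decomposition family `D(F)` that lies
inside a single part of the partition `P` has at least two vertices in `B`. -/
def DecompInB {α : Type*} {n k : ℕ} (F : SimpleGraph α) (G : SimpleGraph (Fin n))
    (P : Fin n → Fin k) (B : Finset (Fin n)) : Prop :=
  ∀ c : α → Fin (k + 1), (∀ a b, F.Adj a b → c a ≠ c b) →
    ∀ i j : Fin (k + 1), i ≠ j →
      ∀ ψ : {a : α // c a = i ∨ c a = j} ↪ Fin n,
        (∀ a b : {a : α // c a = i ∨ c a = j}, F.Adj a.1 b.1 → G.Adj (ψ a) (ψ b)) →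
        (∀ a b : {a : α // c a = i ∨ c a = j}, P (ψ a) = P (ψ b)) →
        ∃ a b : {a : α // c a = i ∨ c a = j}, a ≠ b ∧ ψ a ∈ B ∧ ψ b ∈ B


/-! A copy of `K_r^p` in a `p`-graph is an `r`-set all of whose `p`-subsets are edges, so the
`r`-graph of these copies is `F^{(r)+}`-free whenever the `p`-graph is `F^{(p)+}`-free (shrink
each edge of a copy of `F^{(r)+}` to `p` vertices); hence
`ex_p(n, K_r^p, F^{(p)+}) ≤ ex_r(n, F^{(r)+})`.

Conversely, let `H` be an `F^{(r)+}`-free `r`-graph and call a `p`-set `t`-fat if it is the kernel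
of a sunflower of `t` edges of `H`, with `t` large in terms of `F`. A copy of `F^{(p)+}` made of fat
sets extends greedily, one petal per edge, to a copy of `F^{(r)+}` in `H`, so the `p`-graph of fat
sets is `F^{(p)+}`-free. An edge of `H` all of whose `p`-subsets are fat is a copy of `K_r^p` in it,
and a non-fat `p`-set lies in `O(n^{r-p-1})` edges: a largest sunflower with that kernel has fewer
than `t` petals, and every other edge through the kernel meets one of them. So all but `O(n^{r-1})`
edges of `H` are copies of `K_r^p` in an `F^{(p)+}`-free `p`-graph. -/

section Sunflower

variable {V : Type*} [DecidableEq V]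

lemma Finset.inter_eq_of_disjoint_sdiff {A e e' : Finset V} (he : A ⊆ e) (he' : A ⊆ e')
    (h : Disjoint (e \ A) (e' \ A)) : e ∩ e' = A := by
  refine Subset.antisymm (fun x hx => ?_) (subset_inter he he')
  by_contra hxA
  rw [mem_inter] at hx
  exact disjoint_left.mp h (mem_sdiff.mpr ⟨hx.1, hxA⟩) (mem_sdiff.mpr ⟨hx.2, hxA⟩)

lemma Finset.disjoint_sdiff_of_inter_eq {A e e' : Finset V} (h : e ∩ e' = A) :
    Disjoint (e \ A) (e' \ A) := by
  rw [← h, sdiff_inter_self_right, sdiff_inter_self_left]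
  exact disjoint_sdiff_sdiff

/-- Each point of `Z` lies in at most one petal `e \ K`. -/
lemma Finset.exists_mem_disjoint_sdiff_of_card_lt {C : Finset (Finset V)} {K Z : Finset V}
    (hC : (C : Set (Finset V)).Pairwise (fun e e' => e ∩ e' = K)) (hZ : #Z < #C) :
    ∃ e ∈ C, Disjoint (e \ K) Z := by
  by_contra! hmeet
  simp only [not_disjoint_iff] at hmeet
  obtain ⟨e₀, he₀⟩ := card_pos.mp (hZ.trans_le' (Nat.zero_le _))
  have : Nonempty V := ⟨(hmeet e₀ he₀).choose⟩
  choose! z hzpetal hzZ using hmeet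
  refine hZ.not_ge (card_le_card_of_injOn z hzZ fun e he e' he' hzz => ?_)
  by_contra hne
  exact disjoint_left.mp (disjoint_sdiff_of_inter_eq (hC he he' hne)) (hzpetal e he)
    (hzz ▸ hzpetal e' he')

lemma Finset.exists_disjoint_petals {ι : Type*} {r : ℕ} (C : ι → Finset (Finset V))
    (K : ι → Finset V) (Z : Finset V) (s : Finset ι)
    (hC : ∀ i ∈ s, (C i : Set (Finset V)).Pairwise (fun e e' => e ∩ e' = K i))
    (hr : ∀ i ∈ s, ∀ e ∈ C i, #e ≤ r) (hcard : ∀ i ∈ s, #Z + #s * r < #(C i)) :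
    ∃ χ : ι → Finset V, ∀ i ∈ s, χ i ∈ C i ∧ Disjoint (χ i \ K i) Z ∧
      ∀ j ∈ s, i ≠ j → Disjoint (χ i \ K i) (χ j \ K j) := by
  induction s using Finset.induction_on with
  | empty => exact ⟨fun _ => ∅, by simp⟩
  | @insert i s hi ih =>
    obtain ⟨χ, hχ⟩ := ih (fun j hj => hC j (mem_insert_of_mem hj))
      (fun j hj => hr j (mem_insert_of_mem hj)) fun j hj =>
        (hcard j (mem_insert_of_mem hj)).trans_le' (by gcongr; exact subset_insert _ _)
    set Z' := Z ∪ s.biUnion (fun j => χ j \ K j)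
    have hZ' : #Z' < #(C i) := calc
      #Z' ≤ #Z + ∑ j ∈ s, #(χ j \ K j) :=
        (card_union_le _ _).trans (by gcongr; exact card_biUnion_le)
      _ ≤ #Z + #s * r := by
        gcongr
        exact sum_le_card_nsmul _ _ _ fun j hj =>
          (card_le_card sdiff_subset).trans (hr j (mem_insert_of_mem hj) _ (hχ j hj).1)
      _ < #(C i) := (hcard i (mem_insert_self _ _)).trans_le' (by gcongr; exact subset_insert _ _)
    obtain ⟨e, heC, heZ'⟩ :=
      exists_mem_disjoint_sdiff_of_card_lt (hC i (mem_insert_self _ _)) hZ'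
    simp only [Z', disjoint_union_right, disjoint_biUnion_right] at heZ'
    refine ⟨Function.update χ i e, fun j hj => ?_⟩
    rcases mem_insert.mp hj with rfl | hjs
    · refine ⟨by simpa using heC, by simpa using heZ'.1, fun j' hj' hne => ?_⟩
      rcases mem_insert.mp hj' with rfl | hj's
      · exact absurd rfl hne
      · simpa [Function.update_of_ne (ne_of_mem_of_not_mem hj's hi)] using heZ'.2 j' hj's
    · rw [Function.update_of_ne (ne_of_mem_of_not_mem hjs hi)]
      refine ⟨(hχ j hjs).1, (hχ j hjs).2.1, fun j' hj' hne => ?_⟩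
      rcases mem_insert.mp hj' with rfl | hj's
      · simpa using (heZ'.2 j hjs).symm
      · rw [Function.update_of_ne (ne_of_mem_of_not_mem hj's hi)]
        exact (hχ j hjs).2.2 j' hj's hne

end Sunflower

namespace HyperGraph

variable {V α : Type*}

section Expansion

variable [DecidableEq V] {F : SimpleGraph α} {p r : ℕ}

lemma card_insert_insert_embedding {φ : α ↪ V} {a b : α} {T : Finset V} (hab : a ≠ b)
    (hT : ∀ x ∈ T, x ∉ Set.range φ) : #(insert (φ a) (insert (φ b) T)) = #T + 2 := by
  have hb : φ b ∉ T := fun h => hT _ h ⟨b, rfl⟩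
  have ha : φ a ∉ insert (φ b) T := by
    rw [mem_insert, not_or]
    exact ⟨φ.injective.ne hab, fun h => hT _ h ⟨a, rfl⟩⟩
  rw [card_insert_of_notMem ha, card_insert_of_notMem hb]

lemma ContainsExpansion.of_subsets (hp : 2 ≤ p) (hpr : p ≤ r) {G : HyperGraph V r}
    {G' : HyperGraph V p} (hsub : ∀ e ∈ G.edges, ∀ f ⊆ e, #f = p → f ∈ G'.edges)
    (hG : G.ContainsExpansion F) : G'.ContainsExpansion F := by
  obtain ⟨φ, S, hcard, hcore, hdisj, hedge⟩ := hG
  have : ∀ g, ∃ T ⊆ S g, p - 2 ≤ #(S g) → #T = p - 2 := fun g =>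
    if h : p - 2 ≤ #(S g) then (exists_subset_card_eq h).imp fun _ hT => ⟨hT.1, fun _ => hT.2⟩
    else ⟨∅, empty_subset _, fun h' => absurd h' h⟩
  choose T hTS hTcard using this
  have hTcard' : ∀ a b, F.Adj a b → #(T s(a, b)) = p - 2 := fun a b hab =>
    hTcard _ (by rw [hcard a b hab]; omega)
  refine ⟨φ, T, hTcard', fun a b hab x hx => hcore a b hab x (hTS _ hx),
    fun g hg g' hg' hne => (hdisj g hg g' hg' hne).mono (hTS g) (hTS g'), fun a b hab => ?_⟩
  refine hsub _ (hedge a b hab) _ (insert_subset_insert _ (insert_subset_insert _ (hTS _))) ?_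
  rw [card_insert_insert_embedding hab.ne fun x hx => hcore a b hab x (hTS _ hx), hTcard' a b hab]
  omega

end Expansion

variable [Fintype V] {p : ℕ}

noncomputable def cliques (G : HyperGraph V p) (r : ℕ) : HyperGraph V r :=
  ⟨univ.filter (fun R => #R = r ∧ ∀ e ⊆ R, #e = p → e ∈ G.edges),
    fun _ hR => (mem_filter.mp hR).2.1⟩

@[simp]
lemma mem_cliques {G : HyperGraph V p} {r : ℕ} {R : Finset V} :
    R ∈ (G.cliques r).edges ↔ #R = r ∧ ∀ e ⊆ R, #e = p → e ∈ G.edges := by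
  simp [cliques]

lemma hyperCliqueCount_eq_card_cliques (G : HyperGraph V p) (r : ℕ) :
    hyperCliqueCount G r = #(G.cliques r).edges := by
  rw [hyperCliqueCount, Nat.card_eq_fintype_card, Fintype.card_subtype]
  rfl

lemma hyperCliqueCount_self (G : HyperGraph V p) : hyperCliqueCount G p = #G.edges := by
  rw [hyperCliqueCount_eq_card_cliques]
  congr 1
  ext e
  rw [mem_cliques]
  refine ⟨fun he => he.2 e Subset.rfl he.1,
    fun he => ⟨G.uniform e he, fun f hf hcard => ?_⟩⟩
  rwa [eq_of_subset_of_card_le hf (by rw [G.uniform e he, hcard])]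

lemma ContainsExpansion.of_cliques [DecidableEq V] {F : SimpleGraph α} {r : ℕ} (hp : 2 ≤ p)
    (hpr : p ≤ r) {G : HyperGraph V p} (h : (G.cliques r).ContainsExpansion F) :
    G.ContainsExpansion F :=
  h.of_subsets hp hpr fun _ he => (mem_cliques.mp he).2

end HyperGraph

@[simp]
lemma mem_fatHyper {V : Type*} [Fintype V] [DecidableEq V] {p r t : ℕ} {G : HyperGraph V r}
    {A : Finset V} : A ∈ (fatHyper t p G).edges ↔ #A = p ∧ TFat t G A := by
  simp [fatHyper]

namespace HyperGraph

variable {V : Type*} [Fintype V] [DecidableEq V] {p r : ℕ}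

lemma card_filter_superset_le (H : HyperGraph V r) (B : Finset V) :
    #(H.edges.filter (B ⊆ ·)) ≤ (Fintype.card V).choose (r - #B) := by
  rw [← card_univ, ← card_powersetCard]
  refine card_le_card_of_injOn (· \ B) (fun e he => ?_) fun e he e' he' h => ?_
  · rw [mem_coe, mem_filter] at he
    rw [mem_coe, mem_powersetCard, card_sdiff_of_subset he.2, H.uniform e he.1]
    exact ⟨subset_univ _, rfl⟩
  · rw [mem_coe, mem_filter] at he he'
    rw [← sdiff_union_of_subset he.2, ← sdiff_union_of_subset he'.2]
    exact congrArg (· ∪ B) h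

lemma card_filter_superset_le_of_not_tFat {t : ℕ} (H : HyperGraph V r) {A : Finset V}
    (hA : ¬ TFat t H A) :
    #(H.edges.filter (A ⊆ ·)) ≤ t + t * r * Fintype.card V ^ (r - #A - 1) := by
  set E₀ := H.edges.filter (A ⊆ ·)
  obtain ⟨E, hE, hmax⟩ := exists_max_image
    (E₀.powerset.filter fun E : Finset (Finset V) =>
      (E : Set (Finset V)).Pairwise (fun e e' => e ∩ e' = A)) card ⟨∅, by simp⟩
  rw [mem_filter, mem_powerset] at hE
  have hEt : #E < t := by
    by_contra! h
    exact hA ⟨E, hE.1.trans (filter_subset _ _), h, fun e he e' he' => hE.2 he he'⟩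
  set W := E.biUnion (· \ A)
  have hW : #W ≤ t * r := calc
    #W ≤ ∑ e ∈ E, #(e \ A) := card_biUnion_le
    _ ≤ #E * r := sum_le_card_nsmul _ _ _ fun e he =>
      (card_le_card sdiff_subset).trans (H.uniform e (mem_filter.mp (hE.1 he)).1).le
    _ ≤ t * r := by gcongr
  have hcover : E₀ ⊆ E ∪ W.biUnion (fun w => H.edges.filter (insert w A ⊆ ·)) := by
    intro e he
    rw [mem_filter] at he
    by_contra hcov
    simp only [mem_union, mem_biUnion, mem_filter, not_or, not_exists, not_and] at hcov
    have hdisj : ∀ e' ∈ E, Disjoint (e \ A) (e' \ A) := fun e' he' =>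
      disjoint_left.mpr fun x hx hx' => hcov.2 x (mem_biUnion.mpr ⟨e', he', hx'⟩) he.1
        (insert_subset (mem_sdiff.mp hx).1 he.2)
    have hlarger := hmax (insert e E) <| by
      rw [mem_filter, mem_powerset, coe_insert]
      refine ⟨insert_subset (mem_filter.mpr he) hE.1,
        hE.2.insert_of_notMem hcov.1 fun e' he' => ?_⟩
      have hAe' := (mem_filter.mp (hE.1 he')).2
      exact ⟨inter_eq_of_disjoint_sdiff he.2 hAe' (hdisj e' he'),
        inter_eq_of_disjoint_sdiff hAe' he.2 (hdisj e' he').symm⟩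
    rw [card_insert_of_notMem hcov.1] at hlarger
    omega
  calc #E₀ ≤ #E + ∑ w ∈ W, #(H.edges.filter (insert w A ⊆ ·)) :=
        (card_le_card hcover).trans ((card_union_le _ _).trans (by gcongr; exact card_biUnion_le))
    _ ≤ #E + #W * Fintype.card V ^ (r - #A - 1) := by
        gcongr
        refine sum_le_card_nsmul _ _ _ fun w hw => ?_
        obtain ⟨e, -, hwe⟩ := mem_biUnion.mp hw
        have hcard : r - #(insert w A) = r - #A - 1 := by
          rw [card_insert_of_notMem (mem_sdiff.mp hwe).2]; omega
        exact (H.card_filter_superset_le _).trans (hcard ▸ Nat.choose_le_pow _ _)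
    _ ≤ t + t * r * Fintype.card V ^ (r - #A - 1) := by gcongr

lemma card_edges_le_hyperCliqueCount_fatHyper_add (t : ℕ) (hp : 0 < p) (hpr : p < r)
    (H : HyperGraph V r) :
    #H.edges ≤ hyperCliqueCount (fatHyper t p H) r + (t + t * r) * Fintype.card V ^ (r - 1) := by
  set n := Fintype.card V
  set nonFat := (powersetCard p (univ : Finset V)).filter (fun A => ¬ TFat t H A)
  have hcover : H.edges ⊆ ((fatHyper t p H).cliques r).edges ∪
      nonFat.biUnion (fun A => H.edges.filter (A ⊆ ·)) := by
    intro e he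
    by_cases hfat : ∀ A ⊆ e, #A = p → TFat t H A
    · exact mem_union_left _ (mem_cliques.mpr ⟨H.uniform e he, fun A hA hAp =>
        mem_fatHyper.mpr ⟨hAp, hfat A hA hAp⟩⟩)
    · push Not at hfat
      obtain ⟨A, hAe, hAp, hA⟩ := hfat
      exact mem_union_right _ (mem_biUnion.mpr ⟨A, mem_filter.mpr
        ⟨mem_powersetCard.mpr ⟨subset_univ _, hAp⟩, hA⟩, mem_filter.mpr ⟨he, hAe⟩⟩)
  have hnonFat : #nonFat ≤ n ^ p := calc
    #nonFat ≤ #(powersetCard p (univ : Finset V)) := card_filter_le _ _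
    _ = n.choose p := by rw [card_powersetCard, card_univ]
    _ ≤ n ^ p := Nat.choose_le_pow _ _
  have hpow : n ^ p ≤ n ^ (r - 1) := by
    rcases Nat.eq_zero_or_pos n with hn | hn
    · simp [hn, zero_pow hp.ne']
    · exact Nat.pow_le_pow_right hn (by omega)
  have hpow_mul : n ^ p * n ^ (r - p - 1) = n ^ (r - 1) := by
    rw [← pow_add]
    congr 1
    omega
  rw [hyperCliqueCount_eq_card_cliques]
  calc #H.edges ≤ #((fatHyper t p H).cliques r).edges +
        ∑ A ∈ nonFat, #(H.edges.filter (A ⊆ ·)) :=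
        (card_le_card hcover).trans ((card_union_le _ _).trans (by gcongr; exact card_biUnion_le))
    _ ≤ #((fatHyper t p H).cliques r).edges + n ^ p * (t + t * r * n ^ (r - p - 1)) := by
        gcongr
        refine (sum_le_card_nsmul _ _ _ fun A hA => ?_).trans (Nat.mul_le_mul_right _ hnonFat)
        have hAp := (mem_powersetCard.mp (mem_filter.mp hA).1).2
        exact hAp ▸ H.card_filter_superset_le_of_not_tFat (mem_filter.mp hA).2
    _ = #((fatHyper t p H).cliques r).edges + (t * n ^ p + t * r * n ^ (r - 1)) := by
        rw [← hpow_mul]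
        ring
    _ ≤ #((fatHyper t p H).cliques r).edges + (t + t * r) * n ^ (r - 1) := by
        rw [add_mul]
        gcongr

end HyperGraph

lemma SimpleGraph.Adj.mem_edgeFinset {α : Type*} {G : SimpleGraph α} [Fintype G.edgeSet]
    {a b : α} (hab : G.Adj a b) : s(a, b) ∈ G.edgeFinset :=
  SimpleGraph.mem_edgeFinset.mpr (G.mem_edgeSet.mpr hab)

namespace HyperGraph

variable {V α : Type*} [DecidableEq V] [Fintype α] {F : SimpleGraph α} {p r : ℕ}

namespace IsExpansionWitness

variable {G : HyperGraph V p} {φ : α ↪ V} {S : Sym2 α → Finset V}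

lemma card_support_le (hW : G.IsExpansionWitness F φ S) :
    #(univ.map φ ∪ F.edgeFinset.biUnion S) ≤ Fintype.card α + #F.edgeFinset * (p - 2) := calc
  _ ≤ #(univ.map φ) + ∑ g ∈ F.edgeFinset, #(S g) :=
      (card_union_le _ _).trans (by gcongr; exact card_biUnion_le)
  _ ≤ Fintype.card α + #F.edgeFinset * (p - 2) := by
      rw [card_map, card_univ]
      gcongr
      refine sum_le_card_nsmul _ _ _ fun g hg => ?_
      induction g using Sym2.ind with
      | _ a b => exact (hW.1 a b (F.mem_edgeSet.mp (SimpleGraph.mem_edgeFinset.mp hg))).le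

lemma union (hW : G.IsExpansionWitness F φ S) {H : HyperGraph V r} (P : Sym2 α → Finset V)
    (hPZ : ∀ g ∈ F.edgeFinset, Disjoint (P g) (univ.map φ ∪ F.edgeFinset.biUnion S))
    (hPP : ∀ g ∈ F.edgeFinset, ∀ g' ∈ F.edgeFinset, g ≠ g' → Disjoint (P g) (P g'))
    (hH : ∀ a b, F.Adj a b →
      insert (φ a) (insert (φ b) (S s(a, b) ∪ P s(a, b))) ∈ H.edges) :
    H.IsExpansionWitness F φ (fun g => S g ∪ P g) := by
  obtain ⟨-, hcore, hdisj, -⟩ := hW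
  have hSZ : ∀ g ∈ F.edgeFinset, S g ⊆ univ.map φ ∪ F.edgeFinset.biUnion S := fun g hg =>
    subset_union_right.trans' (subset_biUnion_of_mem S hg)
  refine ⟨fun a b hab => ?_, fun a b hab x hx => ?_, fun g hg g' hg' hne => ?_, hH⟩
  · have hg := hab.mem_edgeFinset
    have hcoreP : Disjoint (insert (φ a) (insert (φ b) (S s(a, b)))) (P s(a, b)) := by
      refine (hPZ _ hg).symm.mono_left (insert_subset ?_ (insert_subset ?_ (hSZ _ hg))) <;>
        exact mem_union_left _ (mem_map_of_mem _ (mem_univ _))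
    have hr := H.uniform _ (hH a b hab)
    rw [← insert_union, ← insert_union, card_union_of_disjoint hcoreP,
      card_insert_insert_embedding hab.ne (hcore a b hab)] at hr
    rw [card_union_of_disjoint ((hPZ _ hg).symm.mono_left (hSZ _ hg))]
    omega
  · rcases mem_union.mp hx with hx | hx
    · exact hcore a b hab x hx
    · rintro ⟨c, rfl⟩
      exact disjoint_left.mp (hPZ _ hab.mem_edgeFinset) hx
        (mem_union_left _ (mem_map_of_mem _ (mem_univ c)))
  · have hgF := SimpleGraph.mem_edgeFinset.mpr hg
    have hgF' := SimpleGraph.mem_edgeFinset.mpr hg'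
    simp only [disjoint_union_left, disjoint_union_right]
    exact ⟨⟨hdisj g hg g' hg' hne, (hPZ g hgF).mono_right (hSZ g' hgF')⟩,
      ((hPZ g' hgF').mono_right (hSZ g hgF)).symm, hPP g hgF g' hgF' hne⟩

end IsExpansionWitness

lemma ContainsExpansion.of_fatHyper [Fintype V] {t : ℕ}
    (ht : Fintype.card α + #F.edgeFinset * (p - 2) + #F.edgeFinset * r < t) {H : HyperGraph V r}
    (h : (fatHyper t p H).ContainsExpansion F) : H.ContainsExpansion F := by
  obtain ⟨φ, S, hW⟩ := h
  set K : Sym2 α → Finset V := fun g => g.toFinset.map φ ∪ S g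
  have hK : ∀ a b, K s(a, b) = insert (φ a) (insert (φ b) (S s(a, b))) := fun a b => by
    simp [K, Sym2.toFinset_mk_eq, insert_union]
  have hfat : ∀ g ∈ F.edgeFinset, TFat t H (K g) := by
    intro g hg
    induction g using Sym2.ind with
    | _ a b => exact (mem_fatHyper.mp (hK a b ▸ hW.2.2.2 a b
        (F.mem_edgeSet.mp (SimpleGraph.mem_edgeFinset.mp hg)))).2
  choose! C hCH hCt hCpair using hfat
  obtain ⟨χ, hχ⟩ := Finset.exists_disjoint_petals C K (univ.map φ ∪ F.edgeFinset.biUnion S)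
    F.edgeFinset (fun g hg e he e' he' hne => hCpair g hg e he e' he' hne)
    (fun g hg e he => (H.uniform e (hCH g hg he)).le) fun g hg => by
      have := hW.card_support_le
      have := hCt g hg
      omega
  have hKχ : ∀ a b, F.Adj a b → K s(a, b) ⊆ χ s(a, b) := by
    intro a b hab
    have hg := hab.mem_edgeFinset
    have htwo : 1 < #(C s(a, b)) := by
      have := hCt _ hg
      have := Fintype.one_lt_card_iff.mpr ⟨a, b, hab.ne⟩
      omega
    obtain ⟨e', he', hne⟩ := exists_mem_ne htwo (χ s(a, b))
    rw [← hCpair _ hg e' he' _ (hχ _ hg).1 hne]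
    exact inter_subset_right
  refine ⟨φ, _, hW.union (fun g => χ g \ K g) (fun g hg => (hχ g hg).2.1)
    (fun g hg => (hχ g hg).2.2) fun a b hab => ?_⟩
  rw [← insert_union, ← insert_union, ← hK, union_sdiff_of_subset (hKχ a b hab)]
  exact hCH _ hab.mem_edgeFinset (hχ _ hab.mem_edgeFinset).1

end HyperGraph

section Extremal

variable {α : Type*} {F : SimpleGraph α} {n p r : ℕ}

lemma le_exExpansion {G : HyperGraph (Fin n) r} (hG : ¬ G.ContainsExpansion F) :
    #G.edges ≤ exExpansion r n F :=
  le_csSup ⟨_, by rintro _ ⟨G, -, rfl⟩; exact card_le_univ _⟩ ⟨G, hG, rfl⟩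

lemma exExpansion_le {m : ℕ}
    (h : ∀ G : HyperGraph (Fin n) r, ¬ G.ContainsExpansion F → #G.edges ≤ m) :
    exExpansion r n F ≤ m :=
  csSup_le' (by rintro _ ⟨G, hG, rfl⟩; exact h G hG)

lemma le_exHyperClique {G : HyperGraph (Fin n) p} (hG : ¬ G.ContainsExpansion F) :
    hyperCliqueCount G r ≤ exHyperClique p r n F :=
  le_csSup ⟨_, by
    rintro _ ⟨G, -, rfl⟩
    exact (G.hyperCliqueCount_eq_card_cliques r).trans_le (card_le_univ _)⟩ ⟨G, hG, rfl⟩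

lemma exHyperClique_le_exExpansion (hp : 2 ≤ p) (hpr : p ≤ r) :
    exHyperClique p r n F ≤ exExpansion r n F :=
  csSup_le' <| by
    rintro _ ⟨G, hG, rfl⟩
    rw [G.hyperCliqueCount_eq_card_cliques]
    exact le_exExpansion fun h => hG (h.of_cliques hp hpr)

end Extremal

theorem statement_1_general {α : Type*} [Fintype α] (F : SimpleGraph α) (r p : ℕ)
    (hp : 2 ≤ p) (hpr : p ≤ r) :
    ∃ C : ℕ, ∀ n : ℕ,
      exExpansion r n F ≤ exHyperClique p r n F + C * n ^ (r - 1) ∧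
      exHyperClique p r n F ≤ exExpansion r n F + C * n ^ (r - 1) := by
  obtain ⟨t, ht⟩ : ∃ t, Fintype.card α + #F.edgeFinset * (p - 2) + #F.edgeFinset * r < t :=
    ⟨_, Nat.lt_succ_self _⟩
  refine ⟨t + t * r, fun n => ⟨exExpansion_le fun H hH => ?_,
    (exHyperClique_le_exExpansion hp hpr).trans (Nat.le_add_right _ _)⟩⟩
  rcases hpr.eq_or_lt with rfl | hpr
  · rw [← H.hyperCliqueCount_self]
    exact (le_exHyperClique hH).trans (Nat.le_add_right _ _)
  · calc #H.edges ≤ hyperCliqueCount (fatHyper t p H) r + (t + t * r) * n ^ (r - 1) := by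
          simpa only [Fintype.card_fin] using
            H.card_edges_le_hyperCliqueCount_fatHyper_add t (by omega) hpr
      _ ≤ exHyperClique p r n F + (t + t * r) * n ^ (r - 1) := by
          gcongr
          exact le_exHyperClique fun h => hH (h.of_fatHyper ht)

/-- If `χ(F) = k+1 > r` and `2 ≤ p ≤ r`, then
`|ex_r(n, F^{(r)+}) − ex_p(n, K_r^p, F^{(p)+})| ≤ C n^{r−1}` for a constant `C = C(F,r,p)`. -/
theorem statement_1 {α : Type*} [Fintype α] (F : SimpleGraph α) (k r p : ℕ)
    (hp : 2 ≤ p) (hpr : p ≤ r) (hkr : r < k + 1)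
    (hchi : F.chromaticNumber = (k : ℕ∞) + 1) :
    ∃ C : ℕ, ∀ n : ℕ,
      exExpansion r n F ≤ exHyperClique p r n F + C * n ^ (r - 1) ∧
      exHyperClique p r n F ≤ exExpansion r n F + C * n ^ (r - 1) :=
  statement_1_general F r p hp hpr
end

section
/- Let r ≥ 2, let F be a graph, let G be an F^{(r)+}-free r-graph, and set t = (r−2)|E(F)| + |V(F)|. Define G_r = G and, for 2 ≤ i < r, G_i = Δ*(t)G_{i+1}. Then for every 2 ≤ i ≤ r, the i-graph G_i is F^{(i)+}-free. -/
open Finset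
open scoped Classical

/-!
A copy of `F^{(i)+}` in `Δ*(t)G_{i+1}` lifts to a copy of `F^{(i+1)+}` in `G_{i+1}`: every
core edge is `t`-heavy, so it extends to at least `t` distinct hyperedges by single new
vertices. At most `|V(F)| + (i-2)|E(F)|` of these new vertices lie in the copy already, leaving
at least `|E(F)|` admissible ones for each edge of `F`, and Hall's theorem then picks pairwise
distinct ones. Iterating down from `G_r = G` gives the theorem.
-/

theorem exists_injective_mem_of_card_le {ι β : Type*} [Fintype ι] [DecidableEq β]
    (s : ι → Finset β) (hs : ∀ i, Nat.card ι ≤ #(s i)) :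
    ∃ f : ι → β, Function.Injective f ∧ ∀ i, f i ∈ s i := by
  refine (all_card_le_biUnion_card_iff_exists_injective s).mp fun u => ?_
  obtain rfl | ⟨i, hi⟩ := u.eq_empty_or_nonempty
  · simp
  calc #u ≤ Nat.card ι := Nat.card_eq_fintype_card (α := ι) ▸ card_le_univ u
    _ ≤ #(s i) := hs i
    _ ≤ #(u.biUnion s) := card_le_card (subset_biUnion_of_mem s hi)

namespace HyperGraph

variable {V α : Type*} [DecidableEq V]

noncomputable def expansionEdge (φ : α ↪ V) (S : Sym2 α → Finset V) (e : Sym2 α) :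
    Finset V :=
  e.toFinset.map φ ∪ S e

theorem expansionEdge_mk (φ : α ↪ V) (S : Sym2 α → Finset V) (a b : α) :
    expansionEdge φ S s(a, b) = insert (φ a) (insert (φ b) (S s(a, b))) := by
  rw [expansionEdge, Sym2.toFinset_mk_eq, map_insert, map_singleton, insert_union, singleton_union]

def linkVertices [Fintype V] {r : ℕ} (H : HyperGraph V r) (A : Finset V) : Finset V :=
  univ.filter fun v => v ∉ A ∧ insert v A ∈ H.edges

theorem mem_linkVertices [Fintype V] {r : ℕ} {H : HyperGraph V r} {A : Finset V} {v : V} :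
    v ∈ H.linkVertices A ↔ v ∉ A ∧ insert v A ∈ H.edges := by
  simp [linkVertices]

theorem card_filter_superset_le_card_linkVertices [Fintype V] {r : ℕ} (H : HyperGraph V r)
    {A : Finset V} (hA : #A + 1 = r) :
    #(H.edges.filter (A ⊆ ·)) ≤ #(H.linkVertices A) := by
  refine (card_le_card fun e he => ?_).trans (card_image_le (f := (insert · A)))
  obtain ⟨heH, hAe⟩ := mem_filter.mp he
  obtain ⟨v, hv⟩ : ∃ v, e \ A = {v} := card_eq_one.mp <| by
    rw [card_sdiff_of_subset hAe, H.uniform e heH]; omega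
  have hve : insert v A = e := by rw [insert_eq, ← hv, sdiff_union_of_subset hAe]
  have hvA : v ∉ A := (mem_sdiff.mp (hv ▸ mem_singleton_self v)).2
  exact mem_image.mpr ⟨v, mem_linkVertices.mpr ⟨hvA, hve ▸ heH⟩, hve⟩

variable {F : SimpleGraph α} {φ : α ↪ V} {S : Sym2 α → Finset V}

theorem IsExpansionWitness.expansionEdge_mem {r : ℕ} {G : HyperGraph V r}
    (hw : G.IsExpansionWitness F φ S) {e : Sym2 α}
    (he : e ∈ F.edgeSet) : expansionEdge φ S e ∈ G.edges := by
  induction e using Sym2.ind with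
  | _ a b => rw [expansionEdge_mk]; exact hw.2.2.2 a b he

theorem IsExpansionWitness.extend {n : ℕ} {G : HyperGraph V (n - 1)} (H : HyperGraph V n)
    (hn : 3 ≤ n) (hw : G.IsExpansionWitness F φ S) (f : F.edgeSet → V)
    (hf : Function.Injective f) (hfφ : ∀ e, f e ∉ Set.range φ)
    (hfS : ∀ e, ∀ e' ∈ F.edgeSet, f e ∉ S e')
    (hfH : ∀ e, insert (f e) (expansionEdge φ S e) ∈ H.edges) :
    H.IsExpansionWitness F φ
      (fun e => if he : e ∈ F.edgeSet then insert (f ⟨e, he⟩) (S e) else S e) := by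
  obtain ⟨hcard, hcore, hdisj, -⟩ := hw
  refine ⟨fun a b hab => ?_, fun a b hab x hx => ?_, fun e he e' he' hne => ?_,
    fun a b hab => ?_⟩
  · dsimp only
    rw [dif_pos (F.mem_edgeSet.mpr hab), card_insert_of_notMem (hfS _ _ hab), hcard a b hab]
    omega
  · dsimp only at hx
    rw [dif_pos (F.mem_edgeSet.mpr hab), mem_insert] at hx
    rcases hx with rfl | hx
    · exact hfφ _
    · exact hcore a b hab x hx
  · dsimp only
    simp only [dif_pos he, dif_pos he', disjoint_insert_left, disjoint_insert_right, mem_insert]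
    refine ⟨not_or.mpr ⟨fun h => hne (Subtype.ext_iff.mp (hf h)).symm, hfS _ _ he⟩,
      hfS _ _ he', hdisj e he e' he' hne⟩
  · have h := hfH ⟨s(a, b), hab⟩
    rw [expansionEdge_mk] at h
    dsimp only
    rwa [dif_pos (F.mem_edgeSet.mpr hab), insert_comm (φ b), insert_comm (φ a)]

theorem containsExpansion_of_shadowOp [Fintype α] [Fintype V] {n t : ℕ} (hn : 3 ≤ n)
    (H : HyperGraph V n) (ht : (n - 2) * Nat.card F.edgeSet + Fintype.card α ≤ t)
    (h : (shadowOp t H).ContainsExpansion F) : H.ContainsExpansion F := by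
  obtain ⟨φ, S, hw⟩ := h
  set m := Nat.card F.edgeSet
  set B := F.edgeFinset.biUnion S ∪ univ.map φ
  have hB : #B ≤ (n - 3) * m + Fintype.card α := by
    have hS : ∀ e ∈ F.edgeFinset, #(S e) ≤ n - 3 := fun e he => by
      induction e using Sym2.ind with
      | _ a b => exact (hw.1 a b (SimpleGraph.mem_edgeFinset.mp he)).le
    have hm : #F.edgeFinset = m := by
      rw [SimpleGraph.edgeFinset_card, ← Nat.card_eq_fintype_card]
    calc #B ≤ #F.edgeFinset * (n - 3) + Fintype.card α :=
          (card_union_le _ _).trans <|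
            add_le_add (card_biUnion_le_card_mul _ _ _ hS) (card_map φ).le
      _ = (n - 3) * m + Fintype.card α := by rw [hm, mul_comm]
  have hcand : ∀ e : F.edgeSet, m ≤ #(H.linkVertices (expansionEdge φ S e) \ B) := by
    intro e
    have hheavy := hw.expansionEdge_mem e.2
    simp only [shadowOp, mem_filter, mem_univ, true_and] at hheavy
    have hlink := card_filter_superset_le_card_linkVertices H (A := expansionEdge φ S e)
      (by omega)
    have hsdiff := le_card_sdiff B (H.linkVertices (expansionEdge φ S e))
    have hmul : (n - 2) * m = (n - 3) * m + m := by
      rw [← Nat.succ_mul]; congr 1; omega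
    omega
  obtain ⟨f, hf, hfB⟩ := exists_injective_mem_of_card_le _ hcand
  have hfB' : ∀ e, f e ∉ B := fun e => (mem_sdiff.mp (hfB e)).2
  refine ⟨φ, _, hw.extend H hn f hf (fun e ⟨a, ha⟩ => hfB' e ?_)
    (fun e e' he' hfe => hfB' e ?_) (fun e => (mem_linkVertices.mp (mem_sdiff.mp (hfB e)).1).2)⟩
  · exact mem_union_right _ (ha ▸ mem_map_of_mem φ (mem_univ a))
  · exact mem_union_left _ (mem_biUnion.mpr ⟨e', SimpleGraph.mem_edgeFinset.mpr he', hfe⟩)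

theorem not_containsExpansion_iterShadow [Fintype α] [Fintype V] {r t : ℕ} (G : HyperGraph V r)
    (hG : ¬ G.ContainsExpansion F) (ht : (r - 2) * Nat.card F.edgeSet + Fintype.card α ≤ t) :
    ∀ j ≤ r - 2, ¬ (iterShadow t G j).ContainsExpansion F := by
  intro j
  induction j with
  | zero => exact fun _ => hG
  | succ j ih =>
    refine fun hj h => ih (by omega) (containsExpansion_of_shadowOp (n := r - j) (by omega) _
      (le_trans ?_ ht) h)
    gcongr
    omega

end HyperGraph

theorem statement_6_general {α V : Type*} [Fintype α] [Fintype V] [DecidableEq V]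
    (F : SimpleGraph α) (r t : ℕ)
    (ht : t = (r - 2) * Nat.card F.edgeSet + Fintype.card α)
    (G : HyperGraph V r) (hG : ¬ G.ContainsExpansion F) :
    ∀ i, 2 ≤ i → i ≤ r → ¬ (iterShadow t G (r - i)).ContainsExpansion F :=
  fun i hi hir => HyperGraph.not_containsExpansion_iterShadow G hG ht.ge (r - i) (by omega)

/-- Let `t = (r−2)|E(F)| + |V(F)|`, `G_r = G` and `G_i = Δ*(t)G_{i+1}`
for `2 ≤ i < r` (so `G_i = iterShadow t G (r−i)`). If `G` is `F^{(r)+}`-free, then each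
`G_i` is `F^{(i)+}`-free. -/
theorem statement_6 {α V : Type*} [Fintype α] [Fintype V] [DecidableEq V]
    (F : SimpleGraph α) (r t : ℕ) (hr : 2 ≤ r)
    (ht : t = (r - 2) * Nat.card F.edgeSet + Fintype.card α)
    (G : HyperGraph V r) (hG : ¬ G.ContainsExpansion F) :
    ∀ i, 2 ≤ i → i ≤ r → ¬ (iterShadow t G (r - i)).ContainsExpansion F :=
  statement_6_general F r t ht G hG
end
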